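/- Let G be a connected graph on vertex set {1,...,n} with n ≥ 2 and Φ = (F_1,...,F_n) with γ(F_i) ≥ 2 for all i ∈ [n]. Then γ(G[Φ]) = γ_r(G[Φ]) = γ_t(G[Φ]) = γ_{tr}(G[Φ]) = γ^{oc}(G[Φ]) = γ_t^{oc}(G[Φ]). -/

import Mathlib

open scoped Classical

/-- A dominating set: every vertex is in `D` or adjacent to a vertex of `D`. -/
def isDominatingSet {V : Type*} (H : SimpleGraph V) (D : Finset V) : Prop :=
  ∀ v : V, v ∈ D ∨ ∃ u ∈ D, H.Adj u v

/-- A total dominating set: every vertex has a neighbor in `D`. -/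
def isTotalDominatingSet {V : Type*} (H : SimpleGraph V) (D : Finset V) : Prop :=
  ∀ v : V, ∃ u ∈ D, H.Adj u v

def isMinimalDominatingSet {V : Type*} (H : SimpleGraph V) (D : Finset V) : Prop :=
  isDominatingSet H D ∧ ∀ D' : Finset V, D' ⊂ D → ¬ isDominatingSet H D'

def isMinimalTotalDominatingSet {V : Type*} (H : SimpleGraph V) (D : Finset V) : Prop :=
  isTotalDominatingSet H D ∧ ∀ D' : Finset V, D' ⊂ D → ¬ isTotalDominatingSet H D'

noncomputable def domNum {V : Type*} (H : SimpleGraph V) : ℕ :=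
  sInf {k | ∃ D : Finset V, isDominatingSet H D ∧ D.card = k}

noncomputable def totalDomNum {V : Type*} (H : SimpleGraph V) : ℕ :=
  sInf {k | ∃ D : Finset V, isTotalDominatingSet H D ∧ D.card = k}

noncomputable def upperDomNum {V : Type*} (H : SimpleGraph V) : ℕ :=
  sSup {k | ∃ D : Finset V, isMinimalDominatingSet H D ∧ D.card = k}

noncomputable def upperTotalDomNum {V : Type*} (H : SimpleGraph V) : ℕ :=
  sSup {k | ∃ D : Finset V, isMinimalTotalDominatingSet H D ∧ D.card = k}

/-- Well (γ-)dominated: all minimal dominating sets have the same size. -/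
def WellDominated {V : Type*} (H : SimpleGraph V) : Prop :=
  ∀ D₁ D₂ : Finset V, isMinimalDominatingSet H D₁ → isMinimalDominatingSet H D₂ →
    D₁.card = D₂.card

/-- Well γ_t-dominated: all minimal total dominating sets have the same size. -/
def WellTotalDominated {V : Type*} (H : SimpleGraph V) : Prop :=
  ∀ D₁ D₂ : Finset V, isMinimalTotalDominatingSet H D₁ → isMinimalTotalDominatingSet H D₂ →
    D₁.card = D₂.card

/-- Restrained dominating set: dominating and every vertex outside `D` has a
neighbor outside `D`. -/
def isRestrainedDominatingSet {V : Type*} (H : SimpleGraph V) (D : Finset V) : Prop :=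
  isDominatingSet H D ∧ ∀ v ∉ D, ∃ u ∉ D, H.Adj u v

/-- Outer-connected dominating set: dominating and the subgraph induced by the
complement of `D` is connected. -/
def isOuterConnectedDominatingSet {V : Type*} (H : SimpleGraph V) (D : Finset V) : Prop :=
  isDominatingSet H D ∧ (H.induce ((↑D : Set V)ᶜ)).Connected

def isTotalRestrainedDominatingSet {V : Type*} (H : SimpleGraph V) (D : Finset V) : Prop :=
  isTotalDominatingSet H D ∧ ∀ v ∉ D, ∃ u ∉ D, H.Adj u v

def isTotalOuterConnectedDominatingSet {V : Type*} (H : SimpleGraph V) (D : Finset V) : Prop :=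
  isTotalDominatingSet H D ∧ (H.induce ((↑D : Set V)ᶜ)).Connected

noncomputable def restrainedDomNum {V : Type*} (H : SimpleGraph V) : ℕ :=
  sInf {k | ∃ D : Finset V, isRestrainedDominatingSet H D ∧ D.card = k}

noncomputable def ocDomNum {V : Type*} (H : SimpleGraph V) : ℕ :=
  sInf {k | ∃ D : Finset V, isOuterConnectedDominatingSet H D ∧ D.card = k}

noncomputable def totalRestrainedDomNum {V : Type*} (H : SimpleGraph V) : ℕ :=
  sInf {k | ∃ D : Finset V, isTotalRestrainedDominatingSet H D ∧ D.card = k}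

noncomputable def totalOcDomNum {V : Type*} (H : SimpleGraph V) : ℕ :=
  sInf {k | ∃ D : Finset V, isTotalOuterConnectedDominatingSet H D ∧ D.card = k}

/-- Paired dominating set: dominating and the induced subgraph on `D` has a
perfect matching. -/
def isPairedDominatingSet {V : Type*} (H : SimpleGraph V) (D : Finset V) : Prop :=
  isDominatingSet H D ∧
    ∃ M : SimpleGraph.Subgraph (H.induce (↑D : Set V)), M.IsPerfectMatching

noncomputable def pairedDomNum {V : Type*} (H : SimpleGraph V) : ℕ :=
  sInf {k | ∃ D : Finset V, isPairedDominatingSet H D ∧ D.card = k}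

def isIndependentSet {V : Type*} (H : SimpleGraph V) (D : Finset V) : Prop :=
  ∀ u ∈ D, ∀ v ∈ D, ¬ H.Adj u v

def isMaximalIndependentSet {V : Type*} (H : SimpleGraph V) (D : Finset V) : Prop :=
  isIndependentSet H D ∧ ∀ D' : Finset V, D ⊂ D' → ¬ isIndependentSet H D'

/-- The independent domination number `i(H)`. -/
noncomputable def indepDomNum {V : Type*} (H : SimpleGraph V) : ℕ :=
  sInf {k | ∃ D : Finset V, isMaximalIndependentSet H D ∧ D.card = k}

/-- The independence number `β₀(H)`. -/
noncomputable def indepNum {V : Type*} (H : SimpleGraph V) : ℕ :=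
  sSup {k | ∃ D : Finset V, isIndependentSet H D ∧ D.card = k}

/-- An efficient dominating set: every vertex is dominated by exactly one
member of `D`. -/
def isEfficientDominatingSet {V : Type*} (H : SimpleGraph V) (D : Finset V) : Prop :=
  ∀ v : V, ∃! u : V, u ∈ D ∧ (u = v ∨ H.Adj u v)

/-- The generalized lexicographic product `G[Φ]` of a graph `G` on `Fin n` and a
family `Φ = (F 0, …, F (n-1))` of pairwise disjoint graphs: the `F i` are induced
subgraphs, and vertices in distinct `F i`, `F j` are adjacent iff `i j ∈ E(G)`. -/
def GLP {n : ℕ} (G : SimpleGraph (Fin n)) {V : Fin n → Type*}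
    (F : ∀ i, SimpleGraph (V i)) : SimpleGraph (Σ i, V i) where
  Adj x y := (x.1 ≠ y.1 ∧ G.Adj x.1 y.1) ∨ ∃ h : x.1 = y.1, (F y.1).Adj (h ▸ x.2) y.2
  symm := by
    constructor
    rintro ⟨i, a⟩ ⟨j, b⟩ (⟨hne, hadj⟩ | ⟨h, hadj⟩)
    · exact Or.inl ⟨fun hh => hne hh.symm, hadj.symm⟩
    · dsimp only at h
      subst h
      exact Or.inr ⟨rfl, hadj.symm⟩
  loopless := by
    constructor
    rintro ⟨i, a⟩ (⟨hne, _⟩ | ⟨h, hadj⟩)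
    · exact hne rfl
    · exact (F i).irrefl hadj

/-- The number of vertices of `D ∩ V(F i)`. -/
noncomputable def layerCount {n : ℕ} {V : Fin n → Type*} [∀ i, Fintype (V i)]
    (D : Finset (Σ i, V i)) (i : Fin n) : ℕ :=
  (D.filter (fun x => x.1 = i)).card

/-!
Let `S` be a minimum total dominating set of `G`. Picking one vertex `r i` in every layer `i ∈ S`
gives a total dominating set of `G[Φ]` of size `γ_t(G)`; since every layer has a second vertex,
it is also restrained and its complement is connected. Conversely, a dominating set `D` of
`G[Φ]` projects onto a dominating set `S'` of `G`, and every layer `i ∈ S'` that is isolated in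
`G[S']` is dominated from inside, so `D` meets it in a dominating set of `F i`, which has at least
two vertices. Adding a neighbour of each isolated vertex of `G[S']` to `S'` gives a total dominating
set of `G` of size at most `|D|`. So all six parameters equal `γ_t(G)`.
-/

open Finset

section Domination

variable {V : Type*} {H : SimpleGraph V}

theorem isDominatingSet_of_isTotalDominatingSet {D : Finset V} (hD : isTotalDominatingSet H D) :
    isDominatingSet H D :=
  fun v => Or.inr (hD v)

theorem domNum_le_card {D : Finset V} (hD : isDominatingSet H D) : domNum H ≤ #D :=
  Nat.sInf_le ⟨D, hD, rfl⟩

theorem totalDomNum_le_card {D : Finset V} (hD : isTotalDominatingSet H D) :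
    totalDomNum H ≤ #D :=
  Nat.sInf_le ⟨D, hD, rfl⟩

theorem nontrivial_of_two_le_domNum (h : 2 ≤ domNum H) : Nontrivial V := by
  by_contra hV
  have hsub : Subsingleton V := not_nontrivial_iff_subsingleton.1 hV
  have : Fintype V := Fintype.ofFinite V
  have hle : domNum H ≤ #(univ : Finset V) := domNum_le_card fun v => Or.inl (mem_univ v)
  have hcard : Fintype.card V ≤ 1 := Fintype.card_le_one_iff_subsingleton.2 hsub
  rw [card_univ] at hle
  omega

theorem exists_isTotalDominatingSet_card_eq_totalDomNum [Fintype V] (hH : ∀ v, ∃ w, H.Adj v w) :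
    ∃ D, isTotalDominatingSet H D ∧ #D = totalDomNum H :=
  Nat.sInf_mem (s := {k | ∃ D, isTotalDominatingSet H D ∧ #D = k})
    ⟨_, univ, fun v => (hH v).imp fun w hvw => ⟨mem_univ w, hvw.symm⟩, rfl⟩

theorem totalDomNum_le_card_add_card [DecidableEq V] (hH : ∀ v, ∃ w, H.Adj v w) {S : Finset V}
    (hS : isDominatingSet H S) {B : Finset V} (hB : ∀ v ∈ S, (∀ u ∈ S, ¬ H.Adj u v) → v ∈ B) :
    totalDomNum H ≤ #S + #B := by
  choose nbr hnbr using hH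
  have hT : isTotalDominatingSet H (S ∪ B.image nbr) := by
    intro v
    by_cases hv : ∃ u ∈ S, H.Adj u v
    · obtain ⟨u, hu, huv⟩ := hv
      exact ⟨u, mem_union_left _ hu, huv⟩
    · have hvS : v ∈ S := (hS v).resolve_right hv
      push Not at hv
      exact ⟨nbr v, mem_union_right _ (mem_image_of_mem _ (hB v hvS hv)),
        (hnbr v).symm⟩
  calc totalDomNum H ≤ #(S ∪ B.image nbr) := totalDomNum_le_card hT
    _ ≤ #S + #(B.image nbr) := card_union_le _ _
    _ ≤ #S + #B := Nat.add_le_add_left card_image_le _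

end Domination

theorem sInf_card_eq_of_forall_le {α : Type*} {P : Finset α → Prop} {m : ℕ} {D₀ : Finset α}
    (hD₀ : P D₀) (hcard : #D₀ = m) (hle : ∀ D, P D → m ≤ #D) :
    sInf {k | ∃ D, P D ∧ #D = k} = m :=
  le_antisymm (Nat.sInf_le ⟨D₀, hD₀, hcard⟩)
    (le_csInf ⟨m, D₀, hD₀, hcard⟩ fun _ ⟨D, hD, hk⟩ => hk ▸ hle D hD)

theorem card_image_add_card_filter_le {α β : Type*} [DecidableEq β] (f : α → β) (s : Finset α)
    (p : β → Prop) [DecidablePred p] (hp : ∀ b ∈ s.image f, p b → 2 ≤ #{a ∈ s | f a = b}) :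
    #(s.image f) + #{b ∈ s.image f | p b} ≤ #s := by
  rw [card_filter, card_eq_sum_card_image f s, card_eq_sum_ones, ← sum_add_distrib]
  refine sum_le_sum fun b hb => ?_
  split_ifs with hpb
  · exact hp b hb hpb
  · obtain ⟨a, ha, rfl⟩ := mem_image.1 hb
    exact card_pos.2 ⟨a, mem_filter.2 ⟨ha, rfl⟩⟩

namespace GLP

variable {n : ℕ} {G : SimpleGraph (Fin n)} {V : Fin n → Type*} {F : ∀ i, SimpleGraph (V i)}

theorem adj_of_adj {i j : Fin n} (h : G.Adj i j) (a : V i) (b : V j) :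
    (GLP G F).Adj ⟨i, a⟩ ⟨j, b⟩ :=
  Or.inl ⟨h.ne, h⟩

theorem isDominatingSet_image_fst [∀ i, Nonempty (V i)] {D : Finset (Σ i, V i)}
    (hD : isDominatingSet (GLP G F) D) : isDominatingSet G (D.image Sigma.fst) := by
  intro i
  rcases hD ⟨i, Classical.arbitrary _⟩ with h | ⟨x, hx, ⟨-, hxi⟩ | ⟨hxi, -⟩⟩
  · exact Or.inl (mem_image_of_mem _ h)
  · exact Or.inr ⟨x.1, mem_image_of_mem _ hx, hxi⟩
  · exact Or.inl (mem_image.2 ⟨x, hx, hxi⟩)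

theorem isDominatingSet_preimage_sigmaMk {D : Finset (Σ i, V i)}
    (hD : isDominatingSet (GLP G F) D) {i : Fin n} (hi : ∀ x ∈ D, ¬ G.Adj x.1 i) :
    isDominatingSet (F i) (D.preimage (Sigma.mk i) sigma_mk_injective.injOn) := by
  intro a
  rcases hD ⟨i, a⟩ with h | ⟨⟨j, b⟩, hb, ⟨-, hji⟩ | ⟨hji, hba⟩⟩
  · exact Or.inl (mem_preimage.2 h)
  · exact absurd hji (hi _ hb)
  · obtain rfl : j = i := hji
    exact Or.inr ⟨b, mem_preimage.2 hb, hba⟩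

theorem card_preimage_sigmaMk (D : Finset (Σ i, V i)) (i : Fin n) :
    #(D.preimage (Sigma.mk i) sigma_mk_injective.injOn) = #{x ∈ D | x.1 = i} := by
  rw [card_preimage]
  simp only [Set.range_sigmaMk, Set.mem_preimage, Set.mem_singleton_iff]

theorem totalDomNum_le_card_of_isDominatingSet (hG : ∀ i, ∃ j, G.Adj i j)
    (hF : ∀ i, 2 ≤ domNum (F i)) {D : Finset (Σ i, V i)} (hD : isDominatingSet (GLP G F) D) :
    totalDomNum G ≤ #D := by
  have := fun i => nontrivial_of_two_le_domNum (hF i)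
  calc totalDomNum G
      ≤ #(D.image Sigma.fst) + #{i ∈ D.image Sigma.fst | ∀ j ∈ D.image Sigma.fst, ¬ G.Adj j i} :=
        totalDomNum_le_card_add_card hG (isDominatingSet_image_fst hD) fun i hi h =>
          mem_filter.2 ⟨hi, h⟩
    _ ≤ #D := card_image_add_card_filter_le _ _ _ fun i _ hi => ?_
  calc 2 ≤ domNum (F i) := hF i
    _ ≤ #(D.preimage (Sigma.mk i) sigma_mk_injective.injOn) :=
      domNum_le_card (isDominatingSet_preimage_sigmaMk hD fun x hx =>
        hi x.1 (mem_image_of_mem _ hx))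
    _ = #{x ∈ D | x.1 = i} := card_preimage_sigmaMk D i

section Lift

variable {S : Finset (Fin n)} {r c : ∀ i, V i}

theorem mk_notMem_sigma_singleton {i : Fin n} {a : V i} (ha : a ≠ r i) :
    (⟨i, a⟩ : Σ i, V i) ∉ S.sigma fun i => {r i} := by
  simp [mem_sigma, ha]

theorem isTotalDominatingSet_sigma_singleton (hS : isTotalDominatingSet G S) :
    isTotalDominatingSet (GLP G F) (S.sigma fun i => {r i}) := by
  rintro ⟨i, a⟩
  obtain ⟨j, hj, hji⟩ := hS i
  exact ⟨⟨j, r j⟩, mem_sigma.2 ⟨hj, mem_singleton_self _⟩, adj_of_adj hji _ _⟩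

theorem exists_adj_notMem_sigma_singleton (hG : ∀ i, ∃ j, G.Adj i j) (hcr : ∀ i, c i ≠ r i)
    (x : Σ i, V i) : ∃ y ∉ S.sigma fun i => {r i}, (GLP G F).Adj y x := by
  obtain ⟨j, hij⟩ := hG x.1
  exact ⟨⟨j, c j⟩, mk_notMem_sigma_singleton (hcr j), adj_of_adj hij.symm _ _⟩

theorem connected_induce_compl_sigma_singleton (hG : G.Connected)
    (hadj : ∀ i, ∃ j, G.Adj i j) (hcr : ∀ i, c i ≠ r i) :
    ((GLP G F).induce (↑(S.sigma fun i => {r i}) : Set (Σ i, V i))ᶜ).Connected := by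
  set D := S.sigma fun i => {r i}
  let φ : G →g (GLP G F).induce (↑D : Set (Σ i, V i))ᶜ :=
    { toFun := fun i => ⟨⟨i, c i⟩, mk_notMem_sigma_singleton (hcr i)⟩
      map_rel' := fun h => adj_of_adj h _ _ }
  have hφ : ∀ x : ↥((↑D : Set (Σ i, V i))ᶜ), ((GLP G F).induce _).Reachable (φ x.1.1) x := by
    rintro ⟨⟨i, a⟩, ha⟩
    obtain ⟨j, hij⟩ := hadj i
    let y : ↥((↑D : Set (Σ i, V i))ᶜ) := ⟨⟨j, c j⟩, mk_notMem_sigma_singleton (hcr j)⟩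
    have hφy : ((GLP G F).induce _).Adj (φ i) y := adj_of_adj hij _ _
    have hyx : ((GLP G F).induce _).Adj y ⟨⟨i, a⟩, ha⟩ := adj_of_adj hij.symm _ _
    exact hφy.reachable.trans hyx.reachable
  have : Nonempty ↥((↑D : Set (Σ i, V i))ᶜ) := ⟨φ hG.nonempty.some⟩
  exact .mk fun x y => (hφ x).symm.trans (((hG.preconnected _ _).map φ).trans (hφ y))

end Lift

end GLP

theorem stmt_12_general {n : ℕ} (hn : 2 ≤ n) (G : SimpleGraph (Fin n)) (hG : G.Connected)
    (V : Fin n → Type) (F : ∀ i, SimpleGraph (V i))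
    (hF : ∀ i, 2 ≤ domNum (F i)) :
    domNum (GLP G F) = restrainedDomNum (GLP G F) ∧
    restrainedDomNum (GLP G F) = totalDomNum (GLP G F) ∧
    totalDomNum (GLP G F) = totalRestrainedDomNum (GLP G F) ∧
    totalRestrainedDomNum (GLP G F) = ocDomNum (GLP G F) ∧
    ocDomNum (GLP G F) = totalOcDomNum (GLP G F) := by
  have hadj : ∀ i, ∃ j, G.Adj i j :=
    have := Fin.nontrivial_iff_two_le.2 hn
    hG.preconnected.exists_adj_of_nontrivial
  choose c r hcr using fun i => (nontrivial_of_two_le_domNum (hF i)).exists_pair_ne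
  obtain ⟨S, hS, hScard⟩ := exists_isTotalDominatingSet_card_eq_totalDomNum hadj
  set D := S.sigma fun i => {r i}
  have hDcard : #D = totalDomNum G := by simp [D, card_sigma, hScard]
  have hDtot : isTotalDominatingSet (GLP G F) D := GLP.isTotalDominatingSet_sigma_singleton hS
  have hDdom := isDominatingSet_of_isTotalDominatingSet hDtot
  have hDres : ∀ x ∉ D, ∃ y ∉ D, (GLP G F).Adj y x :=
    fun x _ => GLP.exists_adj_notMem_sigma_singleton hadj hcr x
  have hDconn := GLP.connected_induce_compl_sigma_singleton (F := F) (S := S) hG hadj hcr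
  have key : ∀ P : Finset (Σ i, V i) → Prop, P D → (∀ D', P D' → isDominatingSet (GLP G F) D') →
      sInf {k | ∃ D', P D' ∧ #D' = k} = totalDomNum G := fun P hPD hPdom =>
    sInf_card_eq_of_forall_le hPD hDcard fun D' hD' =>
      GLP.totalDomNum_le_card_of_isDominatingSet hadj hF (hPdom D' hD')
  have h₁ : domNum (GLP G F) = totalDomNum G := key _ hDdom fun _ => id
  have h₂ : restrainedDomNum (GLP G F) = totalDomNum G := key _ ⟨hDdom, hDres⟩ fun _ => And.left
  have h₃ : totalDomNum (GLP G F) = totalDomNum G :=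
    key _ hDtot fun _ => isDominatingSet_of_isTotalDominatingSet
  have h₄ : totalRestrainedDomNum (GLP G F) = totalDomNum G :=
    key _ ⟨hDtot, hDres⟩ fun _ h => isDominatingSet_of_isTotalDominatingSet h.1
  have h₅ : ocDomNum (GLP G F) = totalDomNum G := key _ ⟨hDdom, hDconn⟩ fun _ => And.left
  have h₆ : totalOcDomNum (GLP G F) = totalDomNum G :=
    key _ ⟨hDtot, hDconn⟩ fun _ h => isDominatingSet_of_isTotalDominatingSet h.1
  exact ⟨h₁.trans h₂.symm, h₂.trans h₃.symm, h₃.trans h₄.symm, h₄.trans h₅.symm, h₅.trans h₆.symm⟩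

/-- If `γ(F i) ≥ 2` for all `i`, then
`γ(G[Φ]) = γ_r(G[Φ]) = γ_t(G[Φ]) = γ_{tr}(G[Φ]) = γ^{oc}(G[Φ]) = γ_t^{oc}(G[Φ])`. -/
theorem stmt_12 {n : ℕ} (hn : 2 ≤ n) (G : SimpleGraph (Fin n)) (hG : G.Connected)
    (V : Fin n → Type) [∀ i, Fintype (V i)] (F : ∀ i, SimpleGraph (V i))
    (hF : ∀ i, 2 ≤ domNum (F i)) :
    domNum (GLP G F) = restrainedDomNum (GLP G F) ∧
    restrainedDomNum (GLP G F) = totalDomNum (GLP G F) ∧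
    totalDomNum (GLP G F) = totalRestrainedDomNum (GLP G F) ∧
    totalRestrainedDomNum (GLP G F) = ocDomNum (GLP G F) ∧
    ocDomNum (GLP G F) = totalOcDomNum (GLP G F) :=
  stmt_12_general hn G hG V F hF
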